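/- arXiv:2502.18608 — 2 statements merged into one kernel-verified Lean document; each statement's English description precedes it below -/
import Mathlib

section
/- (Identifiability of the secret key for a fixed permutation.) Let V be finite with |V| ≥ 2 and fix a permutation π of V. If ξ, ξ' ∈ (0,1) and S(p, ξ, π) = S(p, ξ', π) for every probability distribution p on V, then ξ = ξ'. -/
open Finset MeasureTheory
open scoped Classical

variable {V : Type*}

/-- Cumulative sum of probabilities of the first `k` tokens under permutation `π`. -/
noncomputable def cdf [Fintype V] (p : V → ℝ) (π : Fin (Fintype.card V) ≃ V) (k : ℕ) : ℝ :=
  ∑ i ∈ Finset.univ.filter (fun i : Fin (Fintype.card V) => (i : ℕ) < k), p (π i)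

/-- The least index `k` (if any) such that `C_{k+1} ≥ ξ` (0-indexed). -/
noncomputable def selIdx [Fintype V] (p : V → ℝ) (ξ : ℝ)
    (π : Fin (Fintype.card V) ≃ V) : Option (Fin (Fintype.card V)) :=
  let s := Finset.univ.filter (fun k : Fin (Fintype.card V) => ξ ≤ cdf p π ((k : ℕ) + 1))
  if h : s.Nonempty then some (s.min' h) else none

/-- The inverse-transform-sampling selection function `S(p, ξ, π)`. -/
noncomputable def sel [Fintype V] [Nonempty V] (p : V → ℝ) (ξ : ℝ)
    (π : Fin (Fintype.card V) ≃ V) : V :=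
  ((selIdx p ξ π).map π).getD (Classical.arbitrary V)

/-- The reversed permutation: `reverse(π)(i) = π(n+1-i)` (1-indexed). -/
def revp [Fintype V] (π : Fin (Fintype.card V) ≃ V) : Fin (Fintype.card V) ≃ V :=
  Fin.revPerm.trans π

/-! If `ξ < ξ'`, the distribution with mass `ξ` on `π 0` and `1 - ξ` on `π 1` has `C₁ = ξ` and
`C₂ = 1`, so the selection rule returns `π 0` for the key `ξ` but `π 1` for the key `ξ'`. -/

section Selection

variable [Fintype V] {p : V → ℝ} {ξ : ℝ} {π : Fin (Fintype.card V) ≃ V}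

lemma cdf_zero : cdf p π 0 = 0 := by
  simp [cdf]

lemma cdf_succ {k : ℕ} (hk : k < Fintype.card V) :
    cdf p π (k + 1) = cdf p π k + p (π ⟨k, hk⟩) := by
  have hfilter : univ.filter (fun i : Fin (Fintype.card V) => (i : ℕ) < k + 1) =
      insert ⟨k, hk⟩ (univ.filter fun i : Fin (Fintype.card V) => (i : ℕ) < k) := by
    ext i
    simp only [mem_filter, mem_univ, true_and, mem_insert, Fin.ext_iff]
    omega
  rw [cdf, cdf, hfilter, sum_insert (by simp), add_comm]

lemma selIdx_eq_some_of {k : Fin (Fintype.card V)} (hk : ξ ≤ cdf p π (k + 1))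
    (hmin : ∀ j < k, cdf p π (j + 1) < ξ) : selIdx p ξ π = some k := by
  have hmem : k ∈ univ.filter (fun j : Fin (Fintype.card V) => ξ ≤ cdf p π (j + 1)) := by
    simpa using hk
  rw [selIdx, dif_pos ⟨k, hmem⟩, Option.some_inj]
  refine le_antisymm (min'_le _ _ hmem) (le_min' _ _ _ fun j hj => ?_)
  by_contra! hjk
  exact (hmin j hjk).not_ge (mem_filter.mp hj).2

lemma sel_eq_of [Nonempty V] {k : Fin (Fintype.card V)} (hk : ξ ≤ cdf p π (k + 1))
    (hmin : ∀ j < k, cdf p π (j + 1) < ξ) : sel p ξ π = π k := by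
  rw [sel, selIdx_eq_some_of hk hmin, Option.map_some, Option.getD_some]

end Selection

lemma exists_prob_sel_ne [Fintype V] [Nonempty V] (h2 : 2 ≤ Fintype.card V)
    (π : Fin (Fintype.card V) ≃ V) {ξ ξ' : ℝ} (hξ : 0 ≤ ξ) (hlt : ξ < ξ') (hξ' : ξ' ≤ 1) :
    ∃ p : V → ℝ, (∀ v, 0 ≤ p v) ∧ ∑ v, p v = 1 ∧ sel p ξ π ≠ sel p ξ' π := by
  set i₀ : Fin (Fintype.card V) := ⟨0, by omega⟩
  set i₁ : Fin (Fintype.card V) := ⟨1, by omega⟩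
  have hne : π i₀ ≠ π i₁ := π.injective.ne (by simp [i₀, i₁, Fin.ext_iff])
  set p : V → ℝ := Pi.single (π i₀) ξ + Pi.single (π i₁) (1 - ξ)
  have hcdf₁ : cdf p π 1 = ξ := by
    rw [cdf_succ (k := 0) (by omega), cdf_zero]
    change 0 + p (π i₀) = ξ
    simp [p, hne.symm]
  have hcdf₂ : cdf p π 2 = 1 := by
    rw [cdf_succ (k := 1) h2, hcdf₁]
    change ξ + p (π i₁) = 1
    simp [p, hne]
  have hp : 0 ≤ p := add_nonneg (Pi.single_nonneg.mpr hξ) (Pi.single_nonneg.mpr (by linarith))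
  refine ⟨p, hp, ?_, ?_⟩
  · simp [p, sum_add_distrib]
  · have hsel : sel p ξ π = π i₀ := sel_eq_of (by simpa [i₀] using hcdf₁.ge) (by simp [i₀])
    have hsel' : sel p ξ' π = π i₁ := sel_eq_of (by simpa [i₁] using hcdf₂.trans_ge hξ')
      (fun j hj => by
        have : (j : ℕ) = 0 := by simpa [i₁, Fin.lt_def] using hj
        simpa [this, hcdf₁] using hlt)
    rwa [hsel, hsel']

/-- identifiability of the secret key for a fixed permutation. -/
theorem stmt3 [Fintype V] [Nonempty V] (h2 : 2 ≤ Fintype.card V)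
    (π : Fin (Fintype.card V) ≃ V) (ξ ξ' : ℝ)
    (hξ0 : 0 < ξ) (hξ1 : ξ < 1) (hξ'0 : 0 < ξ') (hξ'1 : ξ' < 1)
    (h : ∀ p : V → ℝ, (∀ v, 0 ≤ p v) → (∑ v, p v = 1) → sel p ξ π = sel p ξ' π) :
    ξ = ξ' := by
  by_contra hne
  rcases lt_or_gt_of_ne hne with hlt | hlt
  · obtain ⟨p, hp, hsum, hsel⟩ := exists_prob_sel_ne h2 π hξ0.le hlt hξ'1.le
    exact hsel (h p hp hsum)
  · obtain ⟨p, hp, hsum, hsel⟩ := exists_prob_sel_ne h2 π hξ'0.le hlt hξ1.le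
    exact hsel (h p hp hsum).symm
end

section
/- (Partial-order bounds are valid.) Let p be a distribution on finite V, π a permutation, ξ ∈ (0,1], and let the selected token be y = S(p, ξ, π) with r = π⁻¹(y). Let S₀ ⊆ V be any subset containing y with known positions. Define L = Σ_{t ∈ S₀, π⁻¹(t) < r} p(t) and U = 1 − Σ_{t ∈ S₀, π⁻¹(t) > r} p(t). Then L ≤ C_{r−1} < ξ ≤ C_r ≤ U; in particular L < ξ ≤ U. -/
open Finset MeasureTheory
open scoped Classical

variable {V : Type*}

lemma cdf_full [Fintype V] (p : V → ℝ) (hp1 : ∑ v, p v = 1)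
    (π : Fin (Fintype.card V) ≃ V) : cdf p π (Fintype.card V) = 1 := by
  unfold cdf
  rw [Finset.filter_true_of_mem (fun i _ => i.isLt)]
  rw [← hp1]
  exact Equiv.sum_comp π p

lemma cdf_mono [Fintype V] (p : V → ℝ) (hp0 : ∀ v, 0 ≤ p v)
    (π : Fin (Fintype.card V) ≃ V) {j k : ℕ} (h : j ≤ k) :
    cdf p π j ≤ cdf p π k := by
  apply Finset.sum_le_sum_of_subset_of_nonneg
  · intro i hi
    simp only [Finset.mem_filter, Finset.mem_univ, true_and] at *
    omega
  · intro i _ _; exact hp0 _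

/-- partial-order bounds are valid:
`L ≤ C_{r-1} < ξ ≤ C_r ≤ U` where `L` and `U` only use tokens in the known
subset `S₀`. -/
theorem stmt10 [Fintype V] [Nonempty V] (p : V → ℝ)
    (hp0 : ∀ v, 0 ≤ p v) (hp1 : ∑ v, p v = 1)
    (π : Fin (Fintype.card V) ≃ V) (ξ : ℝ) (hξ0 : 0 < ξ) (hξ1 : ξ ≤ 1)
    (S0 : Finset V) (y : V) (hy : sel p ξ π = y) (hyS : y ∈ S0) :
    (∑ t ∈ S0.filter (fun t => π.symm t < π.symm y), p t) ≤ cdf p π ((π.symm y : ℕ)) ∧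
    cdf p π ((π.symm y : ℕ)) < ξ ∧
    ξ ≤ cdf p π ((π.symm y : ℕ) + 1) ∧
    cdf p π ((π.symm y : ℕ) + 1) ≤
      1 - ∑ t ∈ S0.filter (fun t => π.symm y < π.symm t), p t := by
  have hcard : 0 < Fintype.card V := Fintype.card_pos

  set s := Finset.univ.filter (fun k : Fin (Fintype.card V) => ξ ≤ cdf p π ((k : ℕ) + 1)) with hs
  have hlast : (⟨Fintype.card V - 1, by omega⟩ : Fin (Fintype.card V)) ∈ s := by
    simp only [hs, Finset.mem_filter, Finset.mem_univ, true_and]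
    have : Fintype.card V - 1 + 1 = Fintype.card V := by omega
    rw [this, cdf_full p hp1 π]
    exact hξ1
  have hne : s.Nonempty := ⟨_, hlast⟩
  have hsel : selIdx p ξ π = some (s.min' hne) := by
    unfold selIdx
    simp [hs, hne]
    exact hne
  set r := s.min' hne with hr
  have hyr : π.symm y = r := by
    rw [← hy]
    unfold sel
    rw [hsel]
    simp
  have hrmem : r ∈ s := s.min'_mem hne
  have hξr : ξ ≤ cdf p π ((r : ℕ) + 1) := by
    simpa [hs] using hrmem
  -- C_{r-1} < ξ
  have hcr : cdf p π (r : ℕ) < ξ := by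
    rcases Nat.eq_zero_or_pos (r : ℕ) with h0 | h0
    · rw [h0]
      have : cdf p π 0 = 0 := by
        unfold cdf; simp
      rw [this]; exact hξ0
    · set k : Fin (Fintype.card V) := ⟨(r : ℕ) - 1, by omega⟩ with hk
      have hks : k ∉ s := by
        intro hmem
        have := s.min'_le k hmem
        rw [← hr] at this
        have : (r : ℕ) ≤ (k : ℕ) := this
        simp [hk] at this
        omega
      have : ¬ ξ ≤ cdf p π ((k : ℕ) + 1) := by
        intro h
        exact hks (by simp [hs, h])
      have hk1 : (k : ℕ) + 1 = (r : ℕ) := by simp [hk]; omega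
      rw [hk1] at this
      linarith
  rw [hyr]
  refine ⟨?_, hcr, hξr, ?_⟩
  · -- L ≤ cdf r
    have : (∑ t ∈ S0.filter (fun t => π.symm t < r), p t)
        = ∑ i ∈ (S0.filter (fun t => π.symm t < r)).image π.symm, p (π i) := by
      rw [Finset.sum_image (fun a _ b _ h => π.symm.injective h)]
      simp
    rw [this]
    apply Finset.sum_le_sum_of_subset_of_nonneg
    · intro i hi
      simp only [Finset.mem_image, Finset.mem_filter, Finset.mem_univ, true_and] at *
      obtain ⟨t, ⟨_, ht⟩, rfl⟩ := hi
      exact ht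
    · intro i _ _; exact hp0 _
  · -- C_r ≤ U
    have hsplit : cdf p π ((r : ℕ) + 1)
        + ∑ i ∈ Finset.univ.filter (fun i : Fin (Fintype.card V) => (r : ℕ) < (i : ℕ)), p (π i) = 1 := by
      unfold cdf
      rw [← Finset.sum_union]
      · rw [← hp1, ← Equiv.sum_comp π p]
        congr 1
        ext i
        simp only [Finset.mem_union, Finset.mem_filter, Finset.mem_univ, true_and]
        rw [iff_true]; omega
      · rw [Finset.disjoint_filter]
        intro i _ h1
        omega
    have hsub : (∑ t ∈ S0.filter (fun t => r < π.symm t), p t)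
        ≤ ∑ i ∈ Finset.univ.filter (fun i : Fin (Fintype.card V) => (r : ℕ) < (i : ℕ)), p (π i) := by
      have : (∑ t ∈ S0.filter (fun t => r < π.symm t), p t)
          = ∑ i ∈ (S0.filter (fun t => r < π.symm t)).image π.symm, p (π i) := by
        rw [Finset.sum_image (fun a _ b _ h => π.symm.injective h)]
        simp
      rw [this]
      apply Finset.sum_le_sum_of_subset_of_nonneg
      · intro i hi
        simp only [Finset.mem_image, Finset.mem_filter, Finset.mem_univ, true_and] at *
        obtain ⟨t, ⟨_, ht⟩, rfl⟩ := hi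
        exact ht
      · intro i _ _; exact hp0 _
    linarith
end
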